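/- arXiv:2009.11079 — 16 statements merged into one kernel-verified Lean document; each statement's English description precedes it below -/
import Mathlib

section
/- Let H be a real Hilbert space, K a nonempty closed convex subset of H, and g : H → H a map whose range contains K (for every x ∈ K there exists w ∈ H with g w = x). Let F : H → ℝ be Fréchet differentiable and general convex with respect to g, i.e. F((1−t)·g u + t·g v) ≤ (1−t)·F(g u) + t·F(g v) for all u, v ∈ H with g u, g v ∈ K and all t ∈ [0,1]. Then for u ∈ H with g u ∈ K, the following are equivalent: (i) F(g u) ≤ F(x) for all x ∈ K; (ii) ⟨∇F(g u), g v − g u⟩ ≥ 0 for all v ∈ H with g v ∈ K. -/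
open scoped RealInnerProductSpace

open Set

/-! Since `g` maps onto `K`, general convexity of `F` is ordinary convexity on `K`. The equivalence
is then the first-order optimality condition for a differentiable convex function on a convex set:
at a minimiser the derivative is nonnegative along every segment into `K`, and conversely a convex
function lies above its tangent plane. -/

def GeneralConvexOn {E : Type*} [AddCommGroup E] [Module ℝ E] (K : Set E) (g : E → E)
    (F : E → ℝ) : Prop :=
  ∀ u v : E, g u ∈ K → g v ∈ K → ∀ t ∈ Icc (0 : ℝ) 1,
    F ((1 - t) • g u + t • g v) ≤ (1 - t) * F (g u) + t * F (g v)

theorem GeneralConvexOn.convexOn {E : Type*} [AddCommGroup E] [Module ℝ E] {K : Set E}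
    {g : E → E} {F : E → ℝ} (hF : GeneralConvexOn K g F) (hK : Convex ℝ K)
    (hg : K ⊆ range g) : ConvexOn ℝ K F := by
  refine ⟨hK, ?_⟩
  rintro _ hx _ hy a b ha hb hab
  obtain ⟨u, rfl⟩ := hg hx
  obtain ⟨v, rfl⟩ := hg hy
  obtain rfl : a = 1 - b := by linarith
  exact hF u v hx hy b ⟨hb, by linarith⟩

section FirstOrder

variable {E : Type*} [NormedAddCommGroup E] [NormedSpace ℝ E]
  {s : Set E} {f : E → ℝ} {f' : E →L[ℝ] ℝ} {a x : E}

theorem ConvexOn.hasFDerivAt_sub_le (hf : ConvexOn ℝ s f) (ha : a ∈ s) (hx : x ∈ s)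
    (hf' : HasFDerivAt f f' a) : f' (x - a) ≤ f x - f a := by
  set φ : ℝ → ℝ := f ∘ AffineMap.lineMap a x
  have hφ : ConvexOn ℝ (Icc 0 1) φ := by
    refine (hf.comp_affineMap (AffineMap.lineMap a x)).subset (fun t ht => ?_) (convex_Icc 0 1)
    exact hf.1.lineMap_mem ha hx ht
  have hφ' : HasDerivAt φ (f' (x - a)) 0 := by
    have hline : HasDerivAt (AffineMap.lineMap a x) (x - a) (0 : ℝ) :=
      AffineMap.hasDerivAt_lineMap
    exact (by simpa using hf' : HasFDerivAt f f' (AffineMap.lineMap a x (0 : ℝ))).comp_hasDerivAt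
      0 hline
  simpa [φ, slope_def_field] using
    hφ.le_slope_of_hasDerivAt (by simp) (by simp) zero_lt_one hφ'

theorem IsMinOn.hasFDerivAt_sub_nonneg (hmin : IsMinOn f s a) (hs : Convex ℝ s) (ha : a ∈ s)
    (hx : x ∈ s) (hf' : HasFDerivAt f f' a) : 0 ≤ f' (x - a) :=
  hmin.localize.hasFDerivWithinAt_nonneg hf'.hasFDerivWithinAt
    (sub_mem_posTangentConeAt_of_segment_subset (hs.segment_subset ha hx))

theorem ConvexOn.isMinOn_iff_hasFDerivAt_sub_nonneg (hf : ConvexOn ℝ s f) (ha : a ∈ s)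
    (hf' : HasFDerivAt f f' a) : IsMinOn f s a ↔ ∀ x ∈ s, 0 ≤ f' (x - a) :=
  ⟨fun hmin _ hx => hmin.hasFDerivAt_sub_nonneg hf.1 ha hx hf',
    fun h x hx => sub_nonneg.mp ((h x hx).trans (hf.hasFDerivAt_sub_le ha hx hf'))⟩

end FirstOrder

theorem ConvexOn.isMinOn_iff_inner_gradient_sub_nonneg {H : Type*} [NormedAddCommGroup H]
    [InnerProductSpace ℝ H] [CompleteSpace H] {K : Set H} {F : H → ℝ} {F' a : H}
    (hF : ConvexOn ℝ K F) (ha : a ∈ K) (hF' : HasGradientAt F F' a) :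
    IsMinOn F K a ↔ ∀ x ∈ K, 0 ≤ ⟪F', x - a⟫ :=
  hF.isMinOn_iff_hasFDerivAt_sub_nonneg ha hF'.hasFDerivAt

theorem stmt_0_general {H : Type*} [NormedAddCommGroup H] [InnerProductSpace ℝ H] [CompleteSpace H]
    (K : Set H) (hKconv : Convex ℝ K)
    (g : H → H) (hg : ∀ x ∈ K, ∃ w : H, g w = x)
    (F : H → ℝ) (F' : H → H) (hF : ∀ x : H, HasGradientAt F (F' x) x)
    (hconv : ∀ u v : H, g u ∈ K → g v ∈ K → ∀ t ∈ Set.Icc (0 : ℝ) 1,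
      F ((1 - t) • g u + t • g v) ≤ (1 - t) * F (g u) + t * F (g v))
    (u : H) (hu : g u ∈ K) :
    (∀ x ∈ K, F (g u) ≤ F x) ↔ ∀ v : H, g v ∈ K → 0 ≤ ⟪F' (g u), g v - g u⟫ := by
  have hFK : ConvexOn ℝ K F := GeneralConvexOn.convexOn hconv hKconv hg
  have hVI : (∀ x ∈ K, 0 ≤ ⟪F' (g u), x - g u⟫) ↔
      ∀ v : H, g v ∈ K → 0 ≤ ⟪F' (g u), g v - g u⟫ :=
    ⟨fun h v hv => h (g v) hv, fun h x hx => by obtain ⟨v, rfl⟩ := hg x hx; exact h v hx⟩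
  rw [← isMinOn_iff, hFK.isMinOn_iff_inner_gradient_sub_nonneg hu (hF (g u)), hVI]

theorem stmt_0 {H : Type*} [NormedAddCommGroup H] [InnerProductSpace ℝ H] [CompleteSpace H]
    (K : Set H) (hK : K.Nonempty) (hKclosed : IsClosed K) (hKconv : Convex ℝ K)
    (g : H → H) (hg : ∀ x ∈ K, ∃ w : H, g w = x)
    (F : H → ℝ) (F' : H → H) (hF : ∀ x : H, HasGradientAt F (F' x) x)
    (hconv : ∀ u v : H, g u ∈ K → g v ∈ K → ∀ t ∈ Set.Icc (0 : ℝ) 1,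
      F ((1 - t) • g u + t • g v) ≤ (1 - t) * F (g u) + t * F (g v))
    (u : H) (hu : g u ∈ K) :
    (∀ x ∈ K, F (g u) ≤ F x) ↔ ∀ v : H, g v ∈ K → 0 ≤ ⟪F' (g u), g v - g u⟫ :=
  stmt_0_general K hKconv g hg F F' hF hconv u hu
end

section
/- Let H be a real Hilbert space, K a nonempty closed convex subset of H, T : H → H a continuous linear operator, g : H → H a continuous linear operator, and f ∈ H. Assume T is g-symmetric (⟨T u, g v⟩ = ⟨g u, T v⟩ for all u, v ∈ H) and g-positive (⟨T u, g u⟩ ≥ 0 for all u ∈ H). Define I[v] := ⟨T v, g v⟩ − 2⟨f, g v⟩. Then for u ∈ H with g u ∈ K, the following are equivalent: (i) I[u] ≤ I[w] for all w ∈ H with g w ∈ K; (ii) ⟨T u, g v − g u⟩ ≥ ⟨f, g v − g u⟩ for all v ∈ H with g v ∈ K. -/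
open scoped RealInnerProductSpace

theorem stmt_1 {H : Type*} [NormedAddCommGroup H] [InnerProductSpace ℝ H] [CompleteSpace H]
    (K : Set H) (hK : K.Nonempty) (hKclosed : IsClosed K) (hKconv : Convex ℝ K)
    (T g : H →L[ℝ] H) (f : H)
    (hsym : ∀ u v : H, ⟪T u, g v⟫ = ⟪g u, T v⟫)
    (hpos : ∀ u : H, 0 ≤ ⟪T u, g u⟫)
    (u : H) (hu : g u ∈ K) :
    (∀ w : H, g w ∈ K →
        ⟪T u, g u⟫ - 2 * ⟪f, g u⟫ ≤ ⟪T w, g w⟫ - 2 * ⟪f, g w⟫) ↔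
      ∀ v : H, g v ∈ K → ⟪f, g v - g u⟫ ≤ ⟪T u, g v - g u⟫ := by
  have key : ∀ w : H, (⟪T w, g w⟫ - 2*⟪f, g w⟫) - (⟪T u, g u⟫ - 2*⟪f, g u⟫)
      = 2*(⟪T u, g w - g u⟫ - ⟪f, g w - g u⟫) + ⟪T (w-u), g (w-u)⟫ := by
    intro w
    have h1 : ⟪T w, g u⟫ = ⟪T u, g w⟫ := by
      rw [hsym w u, real_inner_comm]
    simp only [map_sub, inner_sub_left, inner_sub_right]
    rw [h1]; ring
  constructor
  · intro hmin v hv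
    set a : ℝ := ⟪T u, g v - g u⟫ - ⟪f, g v - g u⟫ with ha
    set b : ℝ := ⟪T (v - u), g (v - u)⟫ with hb
    have hbnn : 0 ≤ b := hpos _
    have hstep : ∀ t : ℝ, 0 < t → t ≤ 1 → 0 ≤ 2*t*a + t^2*b := by
      intro t ht0 ht1
      have hcomb : g u + t • (g v - g u) = (1-t) • g u + t • g v := by module
      have hgw : g (u + t • (v - u)) ∈ K := by
        have hmem := hKconv hu hv (by linarith : (0:ℝ) ≤ 1 - t) (le_of_lt ht0)
          (by ring : (1-t) + t = 1)
        have : g (u + t • (v - u)) = (1-t) • g u + t • g v := by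
          rw [map_add, map_smul, map_sub, hcomb]
        rw [this]; exact hmem
      have h2 := hmin _ hgw
      have h3 := key (u + t • (v - u))
      have e1 : g (u + t • (v - u)) - g u = t • (g v - g u) := by
        rw [map_add, map_smul, map_sub]; abel
      have e2 : (u + t • (v - u)) - u = t • (v - u) := by abel
      rw [e1, e2] at h3
      simp only [map_smul, real_inner_smul_left, real_inner_smul_right,
        starRingEnd_apply, star_trivial] at h3
      nlinarith [h3, h2]
    by_contra hna
    push_neg at hna
    have hna' : a < 0 := by linarith
    set t : ℝ := min 1 ((-a)/(b+1)) with ht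
    have hb1 : (0:ℝ) < b + 1 := by linarith
    have ht0 : 0 < t := lt_min one_pos (div_pos (by linarith) hb1)
    have ht1 : t ≤ 1 := min_le_left _ _
    have htb : t * (b+1) ≤ -a := by
      have := min_le_right 1 ((-a)/(b+1))
      calc t * (b+1) ≤ ((-a)/(b+1)) * (b+1) := by
            exact mul_le_mul_of_nonneg_right this (le_of_lt hb1)
        _ = -a := by field_simp
    have := hstep t ht0 ht1
    nlinarith [this, htb, mul_pos ht0 ht0]
  · intro hvar w hw
    have h := key w
    have h1 := hvar w hw
    have h2 := hpos (w - u)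
    linarith
end

section
/- Let H be a real Hilbert space, K a nonempty closed convex subset of H, T : H → H a map, g : H → H a bijection, and ρ > 0. Then: (i) if u ∈ H with g u ∈ K solves the general variational inequality ⟨T u, g v − g u⟩ ≥ 0 for all v with g v ∈ K, then z := g u − ρ·T u satisfies the general Wiener–Hopf equation ρ·T(g⁻¹(P_K z)) + (z − P_K z) = 0; (ii) conversely, if z ∈ H satisfies ρ·T(g⁻¹(P_K z)) + (z − P_K z) = 0, then u := g⁻¹(P_K z) solves the general variational inequality. -/
open scoped RealInnerProductSpace

theorem stmt_3 {H : Type*} [NormedAddCommGroup H] [InnerProductSpace ℝ H] [CompleteSpace H]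
    (K : Set H) (hK : K.Nonempty) (hKclosed : IsClosed K) (hKconv : Convex ℝ K)
    (T : H → H) (g ginv : H → H)
    (hgi : Function.LeftInverse ginv g) (hig : Function.RightInverse ginv g)
    (ρ : ℝ) (hρ : 0 < ρ)
    (P : H → H) (hPmem : ∀ z : H, P z ∈ K)
    (hPproj : ∀ z : H, ∀ w ∈ K, ‖z - P z‖ ≤ ‖z - w‖) :
    (∀ u : H, g u ∈ K → (∀ v : H, g v ∈ K → 0 ≤ ⟪T u, g v - g u⟫) →
        ρ • T (ginv (P (g u - ρ • T u))) + ((g u - ρ • T u) - P (g u - ρ • T u)) = 0) ∧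
    (∀ z : H, ρ • T (ginv (P z)) + (z - P z) = 0 →
        g (ginv (P z)) ∈ K ∧
          ∀ v : H, g v ∈ K → 0 ≤ ⟪T (ginv (P z)), g v - g (ginv (P z))⟫) := by
  -- projection variational characterization
  have hchar : ∀ z : H, ∀ w ∈ K, ⟪z - P z, w - P z⟫ ≤ 0 := by
    intro z
    have hinf : ‖z - P z‖ = ⨅ w : K, ‖z - w‖ := by
      haveI : Nonempty K := hK.to_subtype
      refine le_antisymm (le_ciInf fun w => hPproj z w w.2) ?_
      have hbdd : BddBelow (Set.range fun w : K => ‖z - (w : H)‖) :=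
        ⟨0, by rintro x ⟨w, rfl⟩; exact norm_nonneg _⟩
      exact ciInf_le hbdd ⟨P z, hPmem z⟩
    exact (norm_eq_iInf_iff_real_inner_le_zero hKconv (hPmem z)).1 hinf
  constructor
  · intro u hu hVI
    set z := g u - ρ • T u with hz
    -- show P z = g u
    have h1 : ⟪z - P z, g u - P z⟫ ≤ 0 := hchar z (g u) hu
    have h2 : ⟪z - g u, P z - g u⟫ ≤ 0 := by
      have := hVI (ginv (P z)) (by rw [hig]; exact hPmem z)
      rw [hig] at this
      have hzgu : z - g u = (-ρ) • T u := by rw [neg_smul, hz]; abel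
      rw [hzgu, real_inner_smul_left]
      nlinarith
    have key : P z = g u := by
      have h2' : 0 ≤ ⟪z - g u, g u - P z⟫ := by
        rw [← neg_sub (g u) (P z), inner_neg_right] at h2; linarith
      have h3 : ⟪g u - P z, g u - P z⟫ ≤ 0 := by
        have e : ⟪g u - P z, g u - P z⟫
            = ⟪z - P z, g u - P z⟫ - ⟪z - g u, g u - P z⟫ := by
          rw [← inner_sub_left]; congr 1; abel
        linarith
      have := real_inner_self_nonpos.mp h3
      have := sub_eq_zero.mp this
      exact this.symm
    rw [key, hgi]
    simp only [hz]
    abel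
  · intro z hz
    constructor
    · rw [hig]; exact hPmem z
    · intro v hv
      rw [hig]
      have heq : ρ • T (ginv (P z)) = P z - z := by
        have := hz; rw [add_eq_zero_iff_eq_neg] at this; rw [this]; abel
      have h := hchar z (g v) hv
      have : ⟪ρ • T (ginv (P z)), g v - P z⟫ = ⟪P z - z, g v - P z⟫ := by rw [heq]
      rw [real_inner_smul_left] at this
      have h2 : ⟪P z - z, g v - P z⟫ = -⟪z - P z, g v - P z⟫ := by
        rw [← neg_sub z (P z), inner_neg_left]
      nlinarith
end

section
/- Let H be a real Hilbert space, T, g : H → H maps, and μ > 0. If T is g-cocoercive with constant μ, i.e. ⟨T a − T b, g a − g b⟩ ≥ μ·‖T a − T b‖² for all a, b ∈ H, then for all a, b, c ∈ H one has ⟨T a − T b, g c − g b⟩ ≥ −(1/(4μ))·‖g c − g a‖²; that is, T is g-partially relaxed strongly monotone with constant 1/(4μ). -/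
open scoped RealInnerProductSpace

theorem stmt_4 {H : Type*} [NormedAddCommGroup H] [InnerProductSpace ℝ H] [CompleteSpace H]
    (T g : H → H) (μ : ℝ) (hμ : 0 < μ)
    (hco : ∀ a b : H, μ * ‖T a - T b‖ ^ 2 ≤ ⟪T a - T b, g a - g b⟫) :
    ∀ a b c : H, -(1 / (4 * μ)) * ‖g c - g a‖ ^ 2 ≤ ⟪T a - T b, g c - g b⟫ := by
  intro a b c
  have hsplit : ⟪T a - T b, g c - g b⟫ = ⟪T a - T b, g c - g a⟫ + ⟪T a - T b, g a - g b⟫ := by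
    rw [show g c - g b = (g c - g a) + (g a - g b) by abel, inner_add_right]
  have h1 := hco a b
  have h2 : -(‖T a - T b‖ * ‖g c - g a‖) ≤ ⟪T a - T b, g c - g a⟫ :=
    neg_le_of_abs_le (abs_real_inner_le_norm _ _)
  have hx : (0:ℝ) ≤ ‖T a - T b‖ := norm_nonneg _
  have hy : (0:ℝ) ≤ ‖g c - g a‖ := norm_nonneg _
  rw [hsplit]
  have key : -(1 / (4 * μ)) * ‖g c - g a‖ ^ 2 ≤
      -(‖T a - T b‖ * ‖g c - g a‖) + μ * ‖T a - T b‖ ^ 2 := by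
    rw [← sub_nonneg]
    have heq : -(‖T a - T b‖ * ‖g c - g a‖) + μ * ‖T a - T b‖ ^ 2 -
        -(1 / (4 * μ)) * ‖g c - g a‖ ^ 2 =
        (2 * μ * ‖T a - T b‖ - ‖g c - g a‖) ^ 2 / (4 * μ) := by
      field_simp; ring
    rw [heq]; positivity
  linarith
end

section
/- Let H be a real Hilbert space, K a nonempty closed convex subset of H, T, g : H → H maps, and ρ > 0, h > 0. Assume T is g-monotone, i.e. ⟨T a − T b, g a − g b⟩ ≥ 0 for all a, b ∈ H. Let u ∈ H with g u ∈ K satisfy ⟨T u, g v − g u⟩ ≥ 0 for all v with g v ∈ K. Let uₙ, uₙ₊₁ ∈ H with g uₙ₊₁ ∈ K satisfy ⟨ρ·T uₙ₊₁ + ((1+h)/h)·(g uₙ₊₁ − g uₙ), g v − g uₙ₊₁⟩ ≥ 0 for all v with g v ∈ K. Then ‖g u − g uₙ₊₁‖² ≤ ‖g u − g uₙ‖² − ‖g uₙ − g uₙ₊₁‖². -/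
open scoped RealInnerProductSpace

theorem stmt_5 {H : Type*} [NormedAddCommGroup H] [InnerProductSpace ℝ H] [CompleteSpace H]
    (K : Set H) (hK : K.Nonempty) (hKclosed : IsClosed K) (hKconv : Convex ℝ K)
    (T g : H → H) (ρ h : ℝ) (hρ : 0 < ρ) (hh : 0 < h)
    (hmono : ∀ a b : H, 0 ≤ ⟪T a - T b, g a - g b⟫)
    (u : H) (hu : g u ∈ K)
    (hsol : ∀ v : H, g v ∈ K → 0 ≤ ⟪T u, g v - g u⟫)
    (un un1 : H) (hun1 : g un1 ∈ K)
    (hiter : ∀ v : H, g v ∈ K →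
      0 ≤ ⟪ρ • T un1 + ((1 + h) / h) • (g un1 - g un), g v - g un1⟫) :
    ‖g u - g un1‖ ^ 2 ≤ ‖g u - g un‖ ^ 2 - ‖g un - g un1‖ ^ 2 := by
  set A := g u
  set B := g un
  set C := g un1
  have h1 : 0 ≤ ⟪T u, C - A⟫ := hsol un1 hun1
  have h2 : 0 ≤ ⟪T un1 - T u, C - A⟫ := hmono un1 u
  have h3 : 0 ≤ ρ * ⟪T un1, A - C⟫ + ((1 + h) / h) * ⟪C - B, A - C⟫ := by
    have := hiter u hu
    rwa [inner_add_left, real_inner_smul_left, real_inner_smul_left] at this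
  have h4 : ⟪T un1, A - C⟫ ≤ 0 := by
    have e1 : ⟪T un1 - T u, C - A⟫ = ⟪T un1, C - A⟫ - ⟪T u, C - A⟫ := by
      rw [inner_sub_left]
    have e2 : ⟪T un1, A - C⟫ = -⟪T un1, C - A⟫ := by
      rw [← inner_neg_right]; rw [neg_sub]
    nlinarith
  have hc : 0 < (1 + h) / h := by positivity
  have key : 0 ≤ ⟪C - B, A - C⟫ := by nlinarith
  have expand : ‖A - B‖ ^ 2 = ‖A - C‖ ^ 2 + 2 * ⟪A - C, C - B⟫ + ‖C - B‖ ^ 2 := by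
    have : A - B = (A - C) + (C - B) := by abel
    rw [this, ← norm_add_sq_real]
  have hnorm : ‖B - C‖ = ‖C - B‖ := norm_sub_rev _ _
  rw [hnorm]
  rw [real_inner_comm] at key
  nlinarith
end

section
/- Let H be a real Hilbert space, K a nonempty closed convex subset of H, g : H → H a map, F : H × H → ℝ a bifunction, and ρ > 0, β > 0, α > 0. Assume F is g-partially relaxed strongly monotone with constant α, i.e. F(a, g b) + F(b, g c) ≤ α·‖g c − g a‖² for all a, b, c ∈ H. Let ū ∈ H with g ū ∈ K satisfy F(ū, g v) ≥ 0 for all v with g v ∈ K. Let uₙ, wₙ, uₙ₊₁ ∈ H with g wₙ ∈ K and g uₙ₊₁ ∈ K satisfy, for all v with g v ∈ K: ρ·F(wₙ, g v) + ⟨g uₙ₊₁ − g wₙ, g v − g uₙ₊₁⟩ ≥ 0 and β·F(uₙ, g v) + ⟨g wₙ − g uₙ, g v − g wₙ⟩ ≥ 0. Then ‖g ū − g uₙ₊₁‖² ≤ ‖g ū − g wₙ‖² − (1 − 2αρ)·‖g wₙ − g uₙ₊₁‖² and ‖g ū − g wₙ‖² ≤ ‖g ū − g uₙ‖² − (1 −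 2αβ)·‖g uₙ − g wₙ‖². -/
open scoped RealInnerProductSpace

lemma aux_key {H : Type*} [NormedAddCommGroup H] [InnerProductSpace ℝ H]
    (x y z : H) (c : ℝ) (h : -(c * ‖z - y‖ ^ 2) ≤ ⟪z - y, x - z⟫) :
    ‖x - z‖ ^ 2 ≤ ‖x - y‖ ^ 2 - (1 - 2 * c) * ‖y - z‖ ^ 2 := by
  have e1 : x - z = (x - y) + (y - z) := by abel
  have e2 : ‖x - z‖ ^ 2 = ‖x - y‖ ^ 2 + ‖y - z‖ ^ 2 + 2 * ⟪x - y, y - z⟫ := by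
    rw [e1, @norm_add_sq_real]; ring
  have e3 : ⟪z - y, x - z⟫ = -⟪x - y, y - z⟫ - ‖y - z‖ ^ 2 := by
    rw [show z - y = -(y - z) by abel, inner_neg_left, e1, inner_add_right,
      real_inner_self_eq_norm_sq, real_inner_comm (y - z) (x - y)]
    ring
  have e4 : ‖z - y‖ = ‖y - z‖ := norm_sub_rev _ _
  rw [e4] at h
  nlinarith [h, e2, e3]

theorem stmt_6 {H : Type*} [NormedAddCommGroup H] [InnerProductSpace ℝ H] [CompleteSpace H]
    (K : Set H) (hK : K.Nonempty) (hKclosed : IsClosed K) (hKconv : Convex ℝ K)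
    (g : H → H) (F : H → H → ℝ) (ρ β α : ℝ) (hρ : 0 < ρ) (hβ : 0 < β) (hα : 0 < α)
    (hmono : ∀ a b c : H, F a (g b) + F b (g c) ≤ α * ‖g c - g a‖ ^ 2)
    (ubar : H) (hubar : g ubar ∈ K)
    (hsol : ∀ v : H, g v ∈ K → 0 ≤ F ubar (g v))
    (un wn un1 : H) (hwn : g wn ∈ K) (hun1 : g un1 ∈ K)
    (h1 : ∀ v : H, g v ∈ K → 0 ≤ ρ * F wn (g v) + ⟪g un1 - g wn, g v - g un1⟫)
    (h2 : ∀ v : H, g v ∈ K → 0 ≤ β * F un (g v) + ⟪g wn - g un, g v - g wn⟫) :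
    ‖g ubar - g un1‖ ^ 2 ≤
        ‖g ubar - g wn‖ ^ 2 - (1 - 2 * α * ρ) * ‖g wn - g un1‖ ^ 2 ∧
      ‖g ubar - g wn‖ ^ 2 ≤
        ‖g ubar - g un‖ ^ 2 - (1 - 2 * α * β) * ‖g un - g wn‖ ^ 2 := by
  constructor
  · have hA := h1 ubar hubar
    have hB := hsol un1 hun1
    have hC := hmono wn ubar un1
    have key : -((α * ρ) * ‖g un1 - g wn‖ ^ 2) ≤ ⟪g un1 - g wn, g ubar - g un1⟫ := by
      nlinarith [hρ.le]
    have := aux_key (g ubar) (g wn) (g un1) (α * ρ) key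
    linarith [this]
  · have hA := h2 ubar hubar
    have hB := hsol wn hwn
    have hC := hmono un ubar wn
    have key : -((α * β) * ‖g wn - g un‖ ^ 2) ≤ ⟪g wn - g un, g ubar - g wn⟫ := by
      nlinarith [hβ.le]
    have := aux_key (g ubar) (g un) (g wn) (α * β) key
    linarith [this]
end

section
/- Let H be a real Hilbert space, K a nonempty subset of H, g : H → H a map whose range contains K (for every x ∈ K there exists w ∈ H with g w = x), and η : H × H → H a bifunction such that K is general invex with respect to g and η: g u + t·η(g v, g u) ∈ K for all u, v ∈ H with g u, g v ∈ K and all t ∈ [0,1]. Let F : H → ℝ be Fréchet differentiable and general preinvex: F(g u + t·η(g v, g u)) ≤ (1−t)·F(g u) + t·F(g v) for all u, v with g u, g v ∈ K and all t ∈ [0,1]. Then for u ∈ H with g u ∈ K the following are equivalent: (i) F(g u) ≤ F(x) for all x ∈ K; (ii) ⟨∇F(g u), η(g v, g u)⟩ ≥ 0 for all v ∈ H with g v ∈ K. -/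
/-!
Both directions are statements about the right derivative at `t = 0` of
`t ↦ F (g u + t • η (g v) (g u))`, which is `⟪∇F (g u), η (g v) (g u)⟫`. If `g u` minimizes `F`
on `K`, invexity keeps the segment in `K`, so the difference quotients are nonnegative. Conversely,
preinvexity bounds the difference quotients by `F (g v) - F (g u)`, and every point of `K` is some `g v`.
-/

open scoped RealInnerProductSpace
open Filter Topology

section SlopeBounds

variable {φ : ℝ → ℝ} {φ' c x : ℝ}

theorem HasDerivAt.le_of_eventually_sub_le_mul (h : HasDerivAt φ φ' x)
    (hle : ∀ᶠ t in 𝓝[>] 0, φ (x + t) - φ x ≤ t * c) : φ' ≤ c := by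
  refine le_of_tendsto h.tendsto_slope_zero_right ?_
  filter_upwards [hle, self_mem_nhdsWithin] with t ht (htpos : 0 < t)
  rw [smul_eq_mul, inv_mul_le_iff₀ htpos]
  exact ht

theorem HasDerivAt.nonneg_of_eventually_le (h : HasDerivAt φ φ' x)
    (hmin : ∀ᶠ t in 𝓝[>] 0, φ x ≤ φ (x + t)) : 0 ≤ φ' := by
  refine ge_of_tendsto h.tendsto_slope_zero_right ?_
  filter_upwards [hmin, self_mem_nhdsWithin] with t ht (htpos : 0 < t)
  rw [smul_eq_mul]
  exact mul_nonneg (inv_nonneg.2 htpos.le) (sub_nonneg.2 ht)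

end SlopeBounds

theorem eventually_mem_Icc_nhdsGT_zero : ∀ᶠ t in 𝓝[>] (0 : ℝ), t ∈ Set.Icc (0 : ℝ) 1 :=
  mem_of_superset (Ioo_mem_nhdsGT zero_lt_one) Set.Ioo_subset_Icc_self

theorem HasGradientAt.hasDerivAt_add_smul {H : Type*} [NormedAddCommGroup H]
    [InnerProductSpace ℝ H] [CompleteSpace H] {F : H → ℝ} {f' a : H} (hF : HasGradientAt F f' a)
    (d : H) : HasDerivAt (fun t : ℝ => F (a + t • d)) ⟪f', d⟫ 0 := by
  have hline : HasDerivAt (fun t : ℝ => a + t • d) d 0 := by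
    simpa using ((hasDerivAt_id (0 : ℝ)).smul_const d).const_add a
  have hF0 : HasFDerivAt F (InnerProductSpace.toDual ℝ H f') (a + (0 : ℝ) • d) := by
    simpa using hF.hasFDerivAt
  have hcomp : HasDerivAt (fun t : ℝ => F (a + t • d)) (InnerProductSpace.toDual ℝ H f' d) 0 :=
    hF0.comp_hasDerivAt 0 hline
  simpa using hcomp

theorem stmt_7_general {H : Type*} [NormedAddCommGroup H] [InnerProductSpace ℝ H] [CompleteSpace H]
    (K : Set H)
    (g : H → H) (hg : ∀ x ∈ K, ∃ w : H, g w = x)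
    (η : H → H → H)
    (hinvex : ∀ u v : H, g u ∈ K → g v ∈ K → ∀ t ∈ Set.Icc (0 : ℝ) 1,
      g u + t • η (g v) (g u) ∈ K)
    (F : H → ℝ) (F' : H → H) (hF : ∀ x : H, HasGradientAt F (F' x) x)
    (hpre : ∀ u v : H, g u ∈ K → g v ∈ K → ∀ t ∈ Set.Icc (0 : ℝ) 1,
      F (g u + t • η (g v) (g u)) ≤ (1 - t) * F (g u) + t * F (g v))
    (u : H) (hu : g u ∈ K) :
    (∀ x ∈ K, F (g u) ≤ F x) ↔ ∀ v : H, g v ∈ K → 0 ≤ ⟪F' (g u), η (g v) (g u)⟫ := by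
  constructor
  · intro hmin v hv
    refine ((hF (g u)).hasDerivAt_add_smul _).nonneg_of_eventually_le ?_
    filter_upwards [eventually_mem_Icc_nhdsGT_zero] with t ht
    simpa using hmin _ (hinvex u v hu hv t ht)
  · intro hvar x hx
    obtain ⟨w, rfl⟩ := hg x hx
    have hchord : ⟪F' (g u), η (g w) (g u)⟫ ≤ F (g w) - F (g u) := by
      refine ((hF (g u)).hasDerivAt_add_smul _).le_of_eventually_sub_le_mul ?_
      filter_upwards [eventually_mem_Icc_nhdsGT_zero] with t ht
      have hseg := hpre u w hu hx t ht
      simp only [zero_add, zero_smul, add_zero]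
      linarith
    linarith [hvar w hx]

theorem stmt_7 {H : Type*} [NormedAddCommGroup H] [InnerProductSpace ℝ H] [CompleteSpace H]
    (K : Set H) (hK : K.Nonempty)
    (g : H → H) (hg : ∀ x ∈ K, ∃ w : H, g w = x)
    (η : H → H → H)
    (hinvex : ∀ u v : H, g u ∈ K → g v ∈ K → ∀ t ∈ Set.Icc (0 : ℝ) 1,
      g u + t • η (g v) (g u) ∈ K)
    (F : H → ℝ) (F' : H → H) (hF : ∀ x : H, HasGradientAt F (F' x) x)
    (hpre : ∀ u v : H, g u ∈ K → g v ∈ K → ∀ t ∈ Set.Icc (0 : ℝ) 1,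
      F (g u + t • η (g v) (g u)) ≤ (1 - t) * F (g u) + t * F (g v))
    (u : H) (hu : g u ∈ K) :
    (∀ x ∈ K, F (g u) ≤ F x) ↔ ∀ v : H, g v ∈ K → 0 ≤ ⟪F' (g u), η (g v) (g u)⟫ :=
  stmt_7_general K g hg η hinvex F F' hF hpre u hu
end

section
/- Let H be a real Hilbert space, K a nonempty convex subset of H, g : H → H a map whose range contains K (for every x ∈ K there exists w ∈ H with g w = x), p > 1, μ > 0, and F : H → ℝ Fréchet differentiable. Then F is higher order strongly general convex with respect to g, i.e. F(g u + t·(g v − g u)) ≤ (1−t)·F(g u) + t·F(g v) − μ·(t^p·(1−t) + t·(1−t)^p)·‖g v − g u‖^p for all u, v with g u, g v ∈ K and all t ∈ [0,1], if and only if F(g v) − F(g u) ≥ ⟨∇F(g u), g v − g u⟩ + μ·‖g v − g u‖^p for all u, v ∈ H with g u, g v ∈ K. -/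
open scoped RealInnerProductSpace
open Set Filter Topology

section HigherOrderStronglyConvex

variable {H : Type*} [NormedAddCommGroup H] [InnerProductSpace ℝ H]

def HigherOrderStronglyConvexOn (K : Set H) (μ p : ℝ) (F : H → ℝ) : Prop :=
  ∀ x ∈ K, ∀ y ∈ K, ∀ t ∈ Icc (0 : ℝ) 1,
    F (x + t • (y - x)) ≤ (1 - t) * F x + t * F y
      - μ * (t ^ p * (1 - t) + t * (1 - t) ^ p) * ‖y - x‖ ^ p

lemma tendsto_rpow_sub_one_mul_one_sub_add_one_sub_rpow {p : ℝ} (hp : 1 < p) :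
    Tendsto (fun t : ℝ => t ^ (p - 1) * (1 - t) + (1 - t) ^ p) (𝓝 0) (𝓝 1) := by
  have hcont : Continuous (fun t : ℝ => t ^ (p - 1) * (1 - t) + (1 - t) ^ p) := by
    fun_prop (disch := linarith)
  simpa [Real.zero_rpow (by linarith : p - 1 ≠ 0)] using hcont.tendsto 0

variable {F : H → ℝ} {μ p : ℝ} {x y : H}

/-- Dividing the convexity inequality by `t` and letting `t → 0⁺`, the left side becomes the
directional derivative, while `t ^ p / t → 0` because `p > 1`. -/
theorem inner_add_le_sub_of_forall_Ioc [CompleteSpace H] {F' : H → H}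
    (hF : HasGradientAt F (F' x) x) (hp : 1 < p)
    (h : ∀ t ∈ Ioc (0 : ℝ) 1, F (x + t • (y - x)) ≤ (1 - t) * F x + t * F y
      - μ * (t ^ p * (1 - t) + t * (1 - t) ^ p) * ‖y - x‖ ^ p) :
    ⟪F' x, y - x⟫ + μ * ‖y - x‖ ^ p ≤ F y - F x := by
  have hslope : Tendsto (fun t : ℝ => t⁻¹ • (F (x + t • (y - x)) - F x)) (𝓝[>] 0)
      (𝓝 ⟪F' x, y - x⟫) :=
    (hF.hasFDerivAt.hasLineDerivAt (y - x)).tendsto_slope_zero_right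
  have hbound : Tendsto
      (fun t : ℝ => F y - F x - μ * (t ^ (p - 1) * (1 - t) + (1 - t) ^ p) * ‖y - x‖ ^ p)
      (𝓝[>] 0) (𝓝 (F y - F x - μ * 1 * ‖y - x‖ ^ p)) :=
    (((tendsto_rpow_sub_one_mul_one_sub_add_one_sub_rpow hp).const_mul μ).mul_const _
      |>.const_sub _).mono_left nhdsWithin_le_nhds
  have hle : ∀ᶠ t in 𝓝[>] (0 : ℝ), t⁻¹ • (F (x + t • (y - x)) - F x)
      ≤ F y - F x - μ * (t ^ (p - 1) * (1 - t) + (1 - t) ^ p) * ‖y - x‖ ^ p := by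
    filter_upwards [Ioc_mem_nhdsGT (zero_lt_one' ℝ)] with t ht
    have hpow : t ^ p = t * t ^ (p - 1) := by
      rw [← Real.rpow_one_add' ht.1.le (by linarith), add_sub_cancel]
    rw [smul_eq_mul, inv_mul_le_iff₀ ht.1]
    have hconv := h t ht
    rw [hpow] at hconv
    linarith
  linarith [le_of_tendsto_of_tendsto hslope hbound hle]

/-- Apply the gradient inequality at the point `x + t • (y - x)` towards both endpoints and take
the convex combination with weights `1 - t` and `t`: the inner-product terms cancel. -/
theorem le_of_inner_add_le_sub {d : H} {t : ℝ} (ht : t ∈ Icc (0 : ℝ) 1)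
    (hx : ⟪d, x - (x + t • (y - x))⟫ + μ * ‖x - (x + t • (y - x))‖ ^ p
      ≤ F x - F (x + t • (y - x)))
    (hy : ⟪d, y - (x + t • (y - x))⟫ + μ * ‖y - (x + t • (y - x))‖ ^ p
      ≤ F y - F (x + t • (y - x))) :
    F (x + t • (y - x)) ≤ (1 - t) * F x + t * F y
      - μ * (t ^ p * (1 - t) + t * (1 - t) ^ p) * ‖y - x‖ ^ p := by
  obtain ⟨ht0, ht1⟩ := ht
  set z := x + t • (y - x)
  have hxz : x - z = (-t) • (y - x) := by module
  have hyz : y - z = (1 - t) • (y - x) := by module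
  rw [hxz, inner_smul_right, norm_smul, Real.norm_eq_abs, abs_neg, abs_of_nonneg ht0,
    Real.mul_rpow ht0 (norm_nonneg _)] at hx
  rw [hyz, inner_smul_right, norm_smul, Real.norm_eq_abs, abs_of_nonneg (sub_nonneg.2 ht1),
    Real.mul_rpow (sub_nonneg.2 ht1) (norm_nonneg _)] at hy
  nlinarith [mul_le_mul_of_nonneg_left hx (sub_nonneg.2 ht1), mul_le_mul_of_nonneg_left hy ht0]

theorem higherOrderStronglyConvexOn_iff_inner_add_le_sub [CompleteSpace H] {K : Set H}
    (hK : Convex ℝ K) (hp : 1 < p) {F' : H → H} (hF : ∀ x ∈ K, HasGradientAt F (F' x) x) :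
    HigherOrderStronglyConvexOn K μ p F ↔
      ∀ x ∈ K, ∀ y ∈ K, ⟪F' x, y - x⟫ + μ * ‖y - x‖ ^ p ≤ F y - F x :=
  ⟨fun h x hx y hy => inner_add_le_sub_of_forall_Ioc (hF x hx) hp fun t ht =>
      h x hx y hy t (Ioc_subset_Icc_self ht),
    fun h x hx y hy _ ht =>
      have hz := hK.add_smul_sub_mem hx hy ht
      le_of_inner_add_le_sub ht (h _ hz x hx) (h _ hz y hy)⟩

end HigherOrderStronglyConvex

theorem forall₂_comp_mem_iff {α β : Type*} {g : α → β} {K : Set β}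
    (hg : ∀ x ∈ K, ∃ w, g w = x) {P : β → β → Prop} :
    (∀ u v, g u ∈ K → g v ∈ K → P (g u) (g v)) ↔ ∀ x ∈ K, ∀ y ∈ K, P x y := by
  refine ⟨fun h x hx y hy => ?_, fun h u v hu hv => h _ hu _ hv⟩
  obtain ⟨u, rfl⟩ := hg x hx
  obtain ⟨v, rfl⟩ := hg y hy
  exact h u v hx hy

theorem stmt_8_general {H : Type*} [NormedAddCommGroup H] [InnerProductSpace ℝ H] [CompleteSpace H]
    (K : Set H) (hKconv : Convex ℝ K)
    (g : H → H) (hg : ∀ x ∈ K, ∃ w : H, g w = x)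
    (p μ : ℝ) (hp : 1 < p)
    (F : H → ℝ) (F' : H → H) (hF : ∀ x : H, HasGradientAt F (F' x) x) :
    (∀ u v : H, g u ∈ K → g v ∈ K → ∀ t ∈ Set.Icc (0 : ℝ) 1,
        F (g u + t • (g v - g u)) ≤ (1 - t) * F (g u) + t * F (g v)
          - μ * (t ^ p * (1 - t) + t * (1 - t) ^ p) * ‖g v - g u‖ ^ p) ↔
      ∀ u v : H, g u ∈ K → g v ∈ K →
        ⟪F' (g u), g v - g u⟫ + μ * ‖g v - g u‖ ^ p ≤ F (g v) - F (g u) := by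
  exact (forall₂_comp_mem_iff hg).trans <|
    (higherOrderStronglyConvexOn_iff_inner_add_le_sub hKconv hp fun x _ => hF x).trans
      (forall₂_comp_mem_iff hg).symm

theorem stmt_8 {H : Type*} [NormedAddCommGroup H] [InnerProductSpace ℝ H] [CompleteSpace H]
    (K : Set H) (hK : K.Nonempty) (hKconv : Convex ℝ K)
    (g : H → H) (hg : ∀ x ∈ K, ∃ w : H, g w = x)
    (p μ : ℝ) (hp : 1 < p) (hμ : 0 < μ)
    (F : H → ℝ) (F' : H → H) (hF : ∀ x : H, HasGradientAt F (F' x) x) :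
    (∀ u v : H, g u ∈ K → g v ∈ K → ∀ t ∈ Set.Icc (0 : ℝ) 1,
        F (g u + t • (g v - g u)) ≤ (1 - t) * F (g u) + t * F (g v)
          - μ * (t ^ p * (1 - t) + t * (1 - t) ^ p) * ‖g v - g u‖ ^ p) ↔
      ∀ u v : H, g u ∈ K → g v ∈ K →
        ⟪F' (g u), g v - g u⟫ + μ * ‖g v - g u‖ ^ p ≤ F (g v) - F (g u) :=
  stmt_8_general K hKconv g hg p μ hp F F' hF
end

section
/- Let H be a real Hilbert space, K a nonempty convex subset of H, g : H → H a map whose range contains K (for every x ∈ K there exists w ∈ H with g w = x), p > 1, μ > 0, and F : H → ℝ Fréchet differentiable. If the gradient of F is higher order strongly monotone on K, i.e. ⟨∇F(x) − ∇F(y), x − y⟩ ≥ 2μ·‖y − x‖^p for all x, y ∈ K, then F(g v) − F(g u) ≥ ⟨∇F(g u), g v − g u⟩ + (2μ/p)·‖g v − g u‖^p for all u, v ∈ H with g u, g v ∈ K. -/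
open scoped RealInnerProductSpace

/-!
Along the segment from `x` to `y` the function
`φ t = F (x + t • (y - x)) - t * ⟪∇F x, y - x⟫ - (c / p) * t ^ p * ‖y - x‖ ^ p`
is nondecreasing on `[0, 1]`: monotonicity of the gradient at the pair `(x + t • (y - x), x)`,
divided by `t`, is exactly `0 ≤ φ' t`. Comparing `φ 0` with `φ 1` gives the inequality.
-/

open Set

section

variable {H : Type*} [NormedAddCommGroup H] [InnerProductSpace ℝ H]

theorem HasGradientAt.hasDerivAt_comp_add_smul [CompleteSpace H] {F : H → ℝ} {f' x v : H}
    {t : ℝ} (hF : HasGradientAt F f' (x + t • v)) :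
    HasDerivAt (fun s : ℝ => F (x + s • v)) ⟪f', v⟫ t := by
  have hline : HasDerivAt (fun s : ℝ => x + s • v) v t := by
    simpa using ((hasDerivAt_id t).smul_const v).const_add x
  exact hF.hasFDerivAt.comp_hasDerivAt t hline

theorem mul_rpow_sub_one_mul_le_inner_of_le_inner_smul {a v : H} {c p t : ℝ} (ht : 0 < t)
    (h : c * ‖t • v‖ ^ p ≤ ⟪a, t • v⟫) : c * t ^ (p - 1) * ‖v‖ ^ p ≤ ⟪a, v⟫ := by
  rw [inner_smul_right, norm_smul, Real.norm_of_nonneg ht.le,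
    Real.mul_rpow ht.le (norm_nonneg v)] at h
  rw [Real.rpow_sub_one ht.ne', mul_div_assoc', div_mul_eq_mul_div, div_le_iff₀ ht]
  linarith

theorem Convex.inner_gradient_add_div_mul_rpow_le_sub [CompleteSpace H] {K : Set H}
    (hK : Convex ℝ K) {F : H → ℝ} {F' : H → H} (hF : ∀ z ∈ K, HasGradientAt F (F' z) z)
    {c p : ℝ} (hp : 0 < p)
    (hmono : ∀ x ∈ K, ∀ y ∈ K, c * ‖y - x‖ ^ p ≤ ⟪F' x - F' y, x - y⟫)
    {x y : H} (hx : x ∈ K) (hy : y ∈ K) :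
    ⟪F' x, y - x⟫ + c / p * ‖y - x‖ ^ p ≤ F y - F x := by
  set v := y - x
  have hseg : ∀ t ∈ Icc (0 : ℝ) 1, x + t • v ∈ K := fun t ht => hK.add_smul_sub_mem hx hy ht
  set φ : ℝ → ℝ := fun t => F (x + t • v) - t * ⟪F' x, v⟫ - c / p * t ^ p * ‖v‖ ^ p
  set φ' : ℝ → ℝ := fun t =>
    ⟪F' (x + t • v), v⟫ - ⟪F' x, v⟫ - c / p * (p * t ^ (p - 1)) * ‖v‖ ^ p
  have hφ' : ∀ t ∈ Ioo (0 : ℝ) 1, HasDerivAt φ (φ' t) t := fun t ht =>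
    (((hF _ (hseg t (Ioo_subset_Icc_self ht))).hasDerivAt_comp_add_smul).sub
      (hasDerivAt_mul_const _)).sub
      (((Real.hasDerivAt_rpow_const (.inl ht.1.ne')).const_mul _).mul_const _)
  have hφ'_nonneg : ∀ t ∈ Ioo (0 : ℝ) 1, 0 ≤ φ' t := by
    intro t ht
    have h := hmono _ (hseg t (Ioo_subset_Icc_self ht)) x hx
    rw [norm_sub_rev, add_sub_cancel_left] at h
    have := mul_rpow_sub_one_mul_le_inner_of_le_inner_smul ht.1 h
    rw [inner_sub_left] at this
    have hcoef : c / p * (p * t ^ (p - 1)) = c * t ^ (p - 1) := by field_simp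
    simp only [φ', hcoef]
    linarith
  have hφ_cont : ContinuousOn φ (Icc 0 1) := by
    intro t ht
    refine ContinuousAt.continuousWithinAt ?_
    have hFt := ((hF _ (hseg t ht)).hasDerivAt_comp_add_smul).continuousAt
    have hrpow := Real.continuousAt_rpow_const t p (.inr hp.le)
    exact (hFt.sub (continuousAt_id.mul continuousAt_const)).sub
      ((continuousAt_const.mul hrpow).mul continuousAt_const)
  have hmon : MonotoneOn φ (Icc 0 1) := by
    refine monotoneOn_of_hasDerivWithinAt_nonneg (f' := φ') (convex_Icc 0 1) hφ_cont
      (fun t ht => ?_) (fun t ht => ?_) <;> rw [interior_Icc] at ht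
    exacts [(hφ' t ht).hasDerivWithinAt, hφ'_nonneg t ht]
  have h01 := hmon (left_mem_Icc.2 zero_le_one) (right_mem_Icc.2 zero_le_one) zero_le_one
  simp only [φ, v, zero_smul, add_zero, zero_mul, sub_zero, Real.zero_rpow hp.ne', mul_zero,
    one_smul, one_mul, Real.one_rpow, mul_one, add_sub_cancel] at h01
  linarith

end

theorem stmt_10_general {H : Type*} [NormedAddCommGroup H] [InnerProductSpace ℝ H] [CompleteSpace H]
    (K : Set H) (hKconv : Convex ℝ K) (g : H → H) (p μ : ℝ) (hp : 1 < p)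
    (F : H → ℝ) (F' : H → H) (hF : ∀ x : H, HasGradientAt F (F' x) x)
    (hmono : ∀ x ∈ K, ∀ y ∈ K, 2 * μ * ‖y - x‖ ^ p ≤ ⟪F' x - F' y, x - y⟫) :
    ∀ u v : H, g u ∈ K → g v ∈ K →
      ⟪F' (g u), g v - g u⟫ + (2 * μ / p) * ‖g v - g u‖ ^ p ≤ F (g v) - F (g u) :=
  fun _ _ hu hv =>
    hKconv.inner_gradient_add_div_mul_rpow_le_sub (fun z _ => hF z) (by linarith) hmono hu hv

theorem stmt_10 {H : Type*} [NormedAddCommGroup H] [InnerProductSpace ℝ H] [CompleteSpace H]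
    (K : Set H) (hK : K.Nonempty) (hKconv : Convex ℝ K)
    (g : H → H) (hg : ∀ x ∈ K, ∃ w : H, g w = x)
    (p μ : ℝ) (hp : 1 < p) (hμ : 0 < μ)
    (F : H → ℝ) (F' : H → H) (hF : ∀ x : H, HasGradientAt F (F' x) x)
    (hmono : ∀ x ∈ K, ∀ y ∈ K, 2 * μ * ‖y - x‖ ^ p ≤ ⟪F' x - F' y, x - y⟫) :
    ∀ u v : H, g u ∈ K → g v ∈ K →
      ⟪F' (g u), g v - g u⟫ + (2 * μ / p) * ‖g v - g u‖ ^ p ≤ F (g v) - F (g u) :=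
  stmt_10_general K hKconv g p μ hp F F' hF hmono
end

section
/- Let H be a real Hilbert space, K a nonempty convex subset of H, g : H → H a map whose range contains K (for every x ∈ K there exists w ∈ H with g w = x), p > 1, μ > 0, and F : H → ℝ Fréchet differentiable. Assume ∇F is higher order strongly relaxed pseudomonotone on K: for all x, y ∈ K, ⟨∇F(x), y − x⟩ ≥ 0 implies ⟨∇F(y), y − x⟩ ≥ μ·‖y − x‖^p. Then F is higher order strongly pseudoconvex: for all u, v ∈ H with g u, g v ∈ K, if ⟨∇F(g u), g v − g u⟩ ≥ 0 then F(g v) − F(g u) ≥ (μ/p)·‖g v − g u‖^p. -/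
/-!
Fix `x = g u`, `y = g v` and put `c = ‖y - x‖ ^ p`. For `t ∈ (0, 1)` the point
`z_t = x + t (y - x)` lies in `K` and `⟪∇F x, z_t - x⟫ = t ⟪∇F x, y - x⟫ ≥ 0`, so pseudomonotonicity
gives `μ t ^ p c ≤ t ⟪∇F z_t, y - x⟫`, i.e. the derivative of `t ↦ F z_t` dominates the derivative
`μ t ^ (p - 1) c` of `t ↦ (μ / p) t ^ p c`. Comparing the increments of both functions over `[0, 1]`
gives `F y - F x ≥ μ c / p`.
-/

open Set AffineMap
open scoped RealInnerProductSpace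

theorem sub_le_sub_of_hasDerivAt_le {f g f' g' : ℝ → ℝ} {a b : ℝ} (hab : a ≤ b)
    (hf : ContinuousOn f (Icc a b)) (hg : ContinuousOn g (Icc a b))
    (hf' : ∀ t ∈ Ioo a b, HasDerivAt f (f' t) t) (hg' : ∀ t ∈ Ioo a b, HasDerivAt g (g' t) t)
    (hle : ∀ t ∈ Ioo a b, g' t ≤ f' t) :
    g b - g a ≤ f b - f a := by
  have hmono : MonotoneOn (f - g) (Icc a b) := by
    refine monotoneOn_of_hasDerivWithinAt_nonneg (f' := f' - g') (convex_Icc a b) (hf.sub hg)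
      (fun t ht ↦ ?_) (fun t ht ↦ ?_)
    · rw [interior_Icc] at ht ⊢
      exact ((hf' t ht).sub (hg' t ht)).hasDerivWithinAt
    · rw [interior_Icc] at ht
      exact sub_nonneg.2 (hle t ht)
  have hab' := hmono (left_mem_Icc.2 hab) (right_mem_Icc.2 hab) hab
  simp only [Pi.sub_apply] at hab'
  linarith

section Pseudomonotone

variable {H : Type*} [NormedAddCommGroup H] [InnerProductSpace ℝ H]

theorem HasGradientAt.hasDerivAt_comp_lineMap [CompleteSpace H] {F : H → ℝ} {F' x y : H} {t : ℝ}
    (hF : HasGradientAt F F' (lineMap x y t)) :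
    HasDerivAt (fun s ↦ F (lineMap x y s)) ⟪F', y - x⟫ t := by
  simpa [Function.comp_def] using
    (hasGradientAt_iff_hasFDerivAt.1 hF).comp_hasDerivAt t hasDerivAt_lineMap

def HigherOrderStronglyRelaxedPseudomonotoneOn (μ p : ℝ) (K : Set H) (T : H → H) : Prop :=
  ∀ x ∈ K, ∀ y ∈ K, 0 ≤ ⟪T x, y - x⟫ → μ * ‖y - x‖ ^ p ≤ ⟪T y, y - x⟫

namespace HigherOrderStronglyRelaxedPseudomonotoneOn

variable {μ p : ℝ} {K : Set H} {T : H → H} {x y : H}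

theorem mul_rpow_le_inner_lineMap (hT : HigherOrderStronglyRelaxedPseudomonotoneOn μ p K T)
    (hK : Convex ℝ K) (hx : x ∈ K) (hy : y ∈ K) (hxy : 0 ≤ ⟪T x, y - x⟫) {t : ℝ}
    (ht : t ∈ Ioc 0 1) :
    μ * t ^ (p - 1) * ‖y - x‖ ^ p ≤ ⟪T (lineMap x y t), y - x⟫ := by
  obtain ⟨ht0, ht1⟩ := ht
  have hsub : lineMap x y t - x = t • (y - x) := lineMap_vsub_left x y t
  have hpm := hT x hx _ (hK.lineMap_mem hx hy ⟨ht0.le, ht1⟩)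
    (by rw [hsub, real_inner_smul_right]; exact mul_nonneg ht0.le hxy)
  rw [hsub, norm_smul, Real.norm_eq_abs, abs_of_pos ht0, Real.mul_rpow ht0.le (norm_nonneg _),
    real_inner_smul_right] at hpm
  refine le_of_mul_le_mul_left ?_ ht0
  calc t * (μ * t ^ (p - 1) * ‖y - x‖ ^ p) = μ * (t ^ p * ‖y - x‖ ^ p) := by
        rw [Real.rpow_sub_one ht0.ne']; field_simp
    _ ≤ t * ⟪T (lineMap x y t), y - x⟫ := hpm

theorem div_mul_rpow_le_sub [CompleteSpace H] {F : H → ℝ} (hp : 0 < p)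
    (hF : ∀ z, HasGradientAt F (T z) z) (hT : HigherOrderStronglyRelaxedPseudomonotoneOn μ p K T)
    (hK : Convex ℝ K) (hx : x ∈ K) (hy : y ∈ K) (hxy : 0 ≤ ⟪T x, y - x⟫) :
    μ / p * ‖y - x‖ ^ p ≤ F y - F x := by
  set c := ‖y - x‖ ^ p
  have hρ' : ∀ t ∈ Ioo (0 : ℝ) 1,
      HasDerivAt (fun s ↦ μ / p * s ^ p * c) (μ * t ^ (p - 1) * c) t := fun t ht ↦ by
    refine (((Real.hasDerivAt_rpow_const (Or.inl ht.1.ne')).const_mul (μ / p)).mul_const c)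
      |>.congr_deriv ?_
    field_simp
  have hρ : ContinuousOn (fun s : ℝ ↦ μ / p * s ^ p * c) (Icc 0 1) :=
    ((Real.continuous_rpow_const hp.le).const_mul _).mul_const _ |>.continuousOn
  have hφ : ContinuousOn (fun s : ℝ ↦ F (lineMap x y s)) (Icc 0 1) := fun t _ ↦
    ((hF _).hasDerivAt_comp_lineMap).continuousAt.continuousWithinAt
  have hincr := sub_le_sub_of_hasDerivAt_le zero_le_one hφ hρ
    (fun t _ ↦ (hF _).hasDerivAt_comp_lineMap) hρ'
    (fun t ht ↦ hT.mul_rpow_le_inner_lineMap hK hx hy hxy ⟨ht.1, ht.2.le⟩)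
  simpa [Real.zero_rpow hp.ne'] using hincr

end HigherOrderStronglyRelaxedPseudomonotoneOn

end Pseudomonotone

theorem stmt_11_general {H : Type*} [NormedAddCommGroup H] [InnerProductSpace ℝ H] [CompleteSpace H]
    (K : Set H) (hKconv : Convex ℝ K)
    (g : H → H)
    (p μ : ℝ) (hp : 1 < p)
    (F : H → ℝ) (F' : H → H) (hF : ∀ x : H, HasGradientAt F (F' x) x)
    (hpm : ∀ x ∈ K, ∀ y ∈ K,
      0 ≤ ⟪F' x, y - x⟫ → μ * ‖y - x‖ ^ p ≤ ⟪F' y, y - x⟫) :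
    ∀ u v : H, g u ∈ K → g v ∈ K → 0 ≤ ⟪F' (g u), g v - g u⟫ →
      (μ / p) * ‖g v - g u‖ ^ p ≤ F (g v) - F (g u) := fun _ _ hu hv ↦
  HigherOrderStronglyRelaxedPseudomonotoneOn.div_mul_rpow_le_sub (zero_lt_one.trans hp) hF hpm
    hKconv hu hv

theorem stmt_11 {H : Type*} [NormedAddCommGroup H] [InnerProductSpace ℝ H] [CompleteSpace H]
    (K : Set H) (hK : K.Nonempty) (hKconv : Convex ℝ K)
    (g : H → H) (hg : ∀ x ∈ K, ∃ w : H, g w = x)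
    (p μ : ℝ) (hp : 1 < p) (hμ : 0 < μ)
    (F : H → ℝ) (F' : H → H) (hF : ∀ x : H, HasGradientAt F (F' x) x)
    (hpm : ∀ x ∈ K, ∀ y ∈ K,
      0 ≤ ⟪F' x, y - x⟫ → μ * ‖y - x‖ ^ p ≤ ⟪F' y, y - x⟫) :
    ∀ u v : H, g u ∈ K → g v ∈ K → 0 ≤ ⟪F' (g u), g v - g u⟫ →
      (μ / p) * ‖g v - g u‖ ^ p ≤ F (g v) - F (g u) :=
  stmt_11_general K hKconv g p μ hp F F' hF hpm
end

section
/- Let H be a real Hilbert space, K a nonempty convex subset of H, g : H → H a map, p > 1, μ > 0, and F : H → ℝ Fréchet differentiable and higher order strongly general convex with respect to g, i.e. F(g u + t·(g v − g u)) ≤ (1−t)·F(g u) + t·F(g v) − μ·(t^p·(1−t) + t·(1−t)^p)·‖g v − g u‖^p for all u, v with g u, g v ∈ K and all t ∈ [0,1]. If u ∈ H with g u ∈ K satisfies F(g u) ≤ F(x) for all x ∈ K, then F(g v) − F(g u) ≥ μ·‖g v − g u‖^p for all v ∈ H with g v ∈ K. -/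
open scoped RealInnerProductSpace
open Filter Topology

theorem stmt_13 {H : Type*} [NormedAddCommGroup H] [InnerProductSpace ℝ H] [CompleteSpace H]
    (K : Set H) (hK : K.Nonempty) (hKconv : Convex ℝ K)
    (g : H → H) (p μ : ℝ) (hp : 1 < p) (hμ : 0 < μ)
    (F : H → ℝ) (F' : H → H) (hF : ∀ x : H, HasGradientAt F (F' x) x)
    (hconv : ∀ u v : H, g u ∈ K → g v ∈ K → ∀ t ∈ Set.Icc (0 : ℝ) 1,
      F (g u + t • (g v - g u)) ≤ (1 - t) * F (g u) + t * F (g v)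
        - μ * (t ^ p * (1 - t) + t * (1 - t) ^ p) * ‖g v - g u‖ ^ p)
    (u : H) (hu : g u ∈ K) (hmin : ∀ x ∈ K, F (g u) ≤ F x) :
    ∀ v : H, g v ∈ K → μ * ‖g v - g u‖ ^ p ≤ F (g v) - F (g u) := by
  intro v hv
  set N : ℝ := ‖g v - g u‖ ^ p with hN
  -- key estimate for t ∈ (0,1]
  have key : ∀ t ∈ Set.Ioc (0:ℝ) 1,
      μ * (t ^ (p-1) * (1 - t) + (1 - t) ^ p) * N ≤ F (g v) - F (g u) := by
    intro t ht
    obtain ⟨ht0, ht1⟩ := ht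
    have hmem : g u + t • (g v - g u) ∈ K := by
      have := hKconv hu hv (by linarith : (0:ℝ) ≤ 1 - t) ht0.le (by ring)
      convert this using 1
      simp [smul_sub, sub_smul, one_smul]
      abel
    have h1 := hconv u v hu hv t ⟨ht0.le, ht1⟩
    have h2 := hmin _ hmem
    have htp : t ^ p = t * t ^ (p - 1) := by
      have h := Real.rpow_add ht0 1 (p - 1)
      rw [show (1:ℝ) + (p - 1) = p by ring, Real.rpow_one] at h
      exact h
    have h3 : μ * (t ^ p * (1 - t) + t * (1 - t) ^ p) * N
        = t * (μ * (t ^ (p-1) * (1 - t) + (1 - t) ^ p) * N) := by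
      rw [htp]; ring
    nlinarith [h1, h2, ht0]
  -- take the limit t → 0⁺
  haveI hne : (nhdsWithin (0:ℝ) (Set.Ioc (0:ℝ) 1)).NeBot := by
    apply mem_closure_iff_nhdsWithin_neBot.mp
    rw [closure_Ioc (by norm_num : (0:ℝ) ≠ 1)]
    exact ⟨le_refl 0, by norm_num⟩
  have hlim : Filter.Tendsto (fun t : ℝ => μ * (t ^ (p-1) * (1 - t) + (1 - t) ^ p) * N)
      (nhdsWithin 0 (Set.Ioc (0:ℝ) 1)) (nhds (μ * N)) := by
    have hc1 : ContinuousAt (fun t : ℝ => t ^ (p-1)) 0 :=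
      Real.continuousAt_rpow_const 0 (p-1) (Or.inr (by linarith))
    have hc2 : ContinuousAt (fun t : ℝ => (1 - t) ^ p) 0 :=
      ContinuousAt.comp (g := fun s : ℝ => s ^ p)
        (by simpa using Real.continuousAt_rpow_const ((1:ℝ) - 0) p (Or.inl (by norm_num)))
        ((continuous_const.sub continuous_id).continuousAt)
    have hc : ContinuousAt (fun t : ℝ => μ * (t ^ (p-1) * (1 - t) + (1 - t) ^ p) * N) 0 := by
      exact (continuousAt_const.mul ((hc1.mul
        (continuous_const.sub continuous_id).continuousAt).add hc2)).mul continuousAt_const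
    have := hc.continuousWithinAt (s := Set.Ioc (0:ℝ) 1)
    simpa [ContinuousWithinAt, Real.zero_rpow (by linarith : p - 1 ≠ 0),
      Real.one_rpow] using this
  exact le_of_tendsto hlim (eventually_mem_nhdsWithin.mono key)
end

section
/- Let H be a real Hilbert space, K a nonempty convex subset of H, g : H → H a map, p > 1, μ > 0, and f, F : H → ℝ. Assume f is higher order strongly affine general convex with constant μ: f(g u + t·(g v − g u)) = (1−t)·f(g u) + t·f(g v) − μ·(t^p·(1−t) + t·(1−t)^p)·‖g v − g u‖^p for all u, v with g u, g v ∈ K and all t ∈ [0,1]. Then F is higher order strongly general convex with constant μ (i.e. F(g u + t·(g v − g u)) ≤ (1−t)·F(g u) + t·F(g v) − μ·(t^p·(1−t) + t·(1−t)^p)·‖g v − g u‖^p for all such u, v, t) if and only if the function H₀ := F − f is general convex with respect to g, i.e. H₀(g u + t·(g v − g u)) ≤ (1−t)·H₀(g u) + t·H₀(g v) for all u, v with g u, g v ∈ K and all t ∈ [0,1]. -/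
open scoped RealInnerProductSpace

theorem stmt_14 {H : Type*} [NormedAddCommGroup H] [InnerProductSpace ℝ H] [CompleteSpace H]
    (K : Set H) (hK : K.Nonempty) (hKconv : Convex ℝ K)
    (g : H → H) (p μ : ℝ) (hp : 1 < p) (hμ : 0 < μ)
    (f F : H → ℝ)
    (haff : ∀ u v : H, g u ∈ K → g v ∈ K → ∀ t ∈ Set.Icc (0 : ℝ) 1,
      f (g u + t • (g v - g u)) = (1 - t) * f (g u) + t * f (g v)
        - μ * (t ^ p * (1 - t) + t * (1 - t) ^ p) * ‖g v - g u‖ ^ p) :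
    (∀ u v : H, g u ∈ K → g v ∈ K → ∀ t ∈ Set.Icc (0 : ℝ) 1,
        F (g u + t • (g v - g u)) ≤ (1 - t) * F (g u) + t * F (g v)
          - μ * (t ^ p * (1 - t) + t * (1 - t) ^ p) * ‖g v - g u‖ ^ p) ↔
      ∀ u v : H, g u ∈ K → g v ∈ K → ∀ t ∈ Set.Icc (0 : ℝ) 1,
        (F - f) (g u + t • (g v - g u)) ≤
          (1 - t) * (F - f) (g u) + t * (F - f) (g v) := by
  constructor
  · intro h u v hu hv t ht
    have h1 := h u v hu hv t ht
    have h2 := haff u v hu hv t ht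
    simp only [Pi.sub_apply]
    nlinarith [h1, h2]
  · intro h u v hu hv t ht
    have h1 := h u v hu hv t ht
    have h2 := haff u v hu hv t ht
    simp only [Pi.sub_apply] at h1
    nlinarith [h1, h2]
end

section
/- Let H be a real Hilbert space, K a nonempty subset of H, T, g : H → H maps, and ρ > 0, μ > 0, p > 1. Assume T is pseudo g-monotone with respect to μ·‖·‖^p: for all a, b ∈ H with g a, g b ∈ K, ⟨ρ·T a, g b − g a⟩ + μ·‖g b − g a‖^p ≥ 0 implies ⟨ρ·T b, g b − g a⟩ − μ·‖g a − g b‖^p ≥ 0. Let u ∈ H with g u ∈ K satisfy ⟨ρ·T u, g v − g u⟩ + μ·‖g v − g u‖^p ≥ 0 for all v with g v ∈ K, and let uₙ, uₙ₊₁ ∈ H with g uₙ₊₁ ∈ K satisfy ⟨ρ·T uₙ₊₁, g v − g uₙ₊₁⟩ + ⟨uₙ₊₁ − uₙ, v − uₙ₊₁⟩ + μ·‖g v − g uₙ₊₁‖^p ≥ 0 for all v with g v ∈ K. Then ‖uₙ₊₁ − u‖² ≤ ‖uₙ − u‖² − ‖uₙ₊₁ − uₙ‖². -/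
open scoped RealInnerProductSpace

theorem stmt_15 {H : Type*} [NormedAddCommGroup H] [InnerProductSpace ℝ H] [CompleteSpace H]
    (K : Set H) (hK : K.Nonempty) (T g : H → H)
    (ρ μ p : ℝ) (hρ : 0 < ρ) (hμ : 0 < μ) (hp : 1 < p)
    (hpm : ∀ a b : H, g a ∈ K → g b ∈ K →
      0 ≤ ⟪ρ • T a, g b - g a⟫ + μ * ‖g b - g a‖ ^ p →
      0 ≤ ⟪ρ • T b, g b - g a⟫ - μ * ‖g a - g b‖ ^ p)
    (u : H) (hu : g u ∈ K)
    (hsol : ∀ v : H, g v ∈ K → 0 ≤ ⟪ρ • T u, g v - g u⟫ + μ * ‖g v - g u‖ ^ p)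
    (un un1 : H) (hun1 : g un1 ∈ K)
    (hiter : ∀ v : H, g v ∈ K →
      0 ≤ ⟪ρ • T un1, g v - g un1⟫ + ⟪un1 - un, v - un1⟫ + μ * ‖g v - g un1‖ ^ p) :
    ‖un1 - u‖ ^ 2 ≤ ‖un - u‖ ^ 2 - ‖un1 - un‖ ^ 2 := by
  have h1 := hsol un1 hun1
  have h2 := hpm u un1 hu hun1 h1
  have h3 := hiter u hu
  have hnorm : ‖g u - g un1‖ = ‖g un1 - g u‖ := by rw [norm_sub_rev]
  have hcancel : ⟪ρ • T un1, g u - g un1⟫ = - ⟪ρ • T un1, g un1 - g u⟫ := by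
    rw [← inner_neg_right]; congr 1; abel
  have hkey : 0 ≤ ⟪un1 - un, u - un1⟫ := by
    have := add_nonneg h2 h3
    rw [hnorm, hcancel] at this
    linarith
  have hid : ‖un - u‖ ^ 2 = ‖un1 - un‖ ^ 2 + ‖un1 - u‖ ^ 2 + 2 * ⟪un1 - un, u - un1⟫ := by
    have : un - u = (un - un1) + (un1 - u) := by abel
    rw [this, norm_add_sq_real]
    have h4 : ‖un - un1‖ = ‖un1 - un‖ := norm_sub_rev _ _
    have h5 : ⟪un - un1, un1 - u⟫ = ⟪un1 - un, u - un1⟫ := by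
      rw [← inner_neg_neg]; congr 1 <;> abel
    rw [h4, h5]; ring
  linarith
end

section
/- Let H be a real Hilbert space, K a nonempty convex subset of H, g : H → H a map whose range contains K (for every x ∈ K there exists w ∈ H with g w = x), μ > 0, and F : H → ℝ Fréchet differentiable. Then F is strongly exponentially general convex with respect to g, i.e. exp(F(g u + t·(g v − g u))) ≤ (1−t)·exp(F(g u)) + t·exp(F(g v)) − μ·t·(1−t)·‖g v − g u‖² for all u, v with g u, g v ∈ K and all t ∈ [0,1], if and only if exp(F(g v)) − exp(F(g u)) ≥ ⟨exp(F(g u))·∇F(g u), g v − g u⟩ + μ·‖g v − g u‖² for all u, v ∈ H with g u, g v ∈ K. -/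
open scoped RealInnerProductSpace
open Filter Topology Set

/-!
Put `φ = exp ∘ F`, whose gradient at `x` is `exp (F x) • F' x`, and note that as `u, v` range over
`g ⁻¹' K` the points `g u, g v` range over all of `K`. The statement is then the first-order
characterization of `μ`-strong convexity of `φ` on `K`. Forwards, the strong convexity inequality
bounds the difference quotient of `t ↦ φ (x + t • (y - x))` at `0⁺`, and letting `t → 0⁺` gives the
first-order inequality. Backwards, apply the first-order inequality at `x + t • (y - x)` towards `x`
and towards `y`, and take the convex combination with weights `1 - t` and `t`: the gradient terms
cancel.
-/

section StrongConvexity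

variable {E : Type*} [NormedAddCommGroup E] [NormedSpace ℝ E] {f : E → ℝ} {μ : ℝ}

lemma HasFDerivAt.add_mul_norm_sq_le_sub_of_segment_le {x y : E} {f' : E →L[ℝ] ℝ}
    (hf : HasFDerivAt f f' x)
    (h : ∀ t ∈ Ioc (0 : ℝ) 1, f (x + t • (y - x)) ≤
      (1 - t) * f x + t * f y - μ * (t * (1 - t)) * ‖y - x‖ ^ 2) :
    f' (y - x) + μ * ‖y - x‖ ^ 2 ≤ f y - f x := by
  set d := y - x
  have hslope : ∀ᶠ t in 𝓝[>] (0 : ℝ), t⁻¹ • (f (x + t • d) - f x) ≤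
      f y - f x - μ * (1 - t) * ‖d‖ ^ 2 := by
    filter_upwards [Ioc_mem_nhdsGT (zero_lt_one' ℝ)] with t ht
    rw [smul_eq_mul, inv_mul_le_iff₀ ht.1]
    linarith [h t ht]
  have hlim : Tendsto (fun t : ℝ => f y - f x - μ * (1 - t) * ‖d‖ ^ 2) (𝓝[>] 0)
      (𝓝 (f y - f x - μ * ‖d‖ ^ 2)) := by
    have : Continuous fun t : ℝ => f y - f x - μ * (1 - t) * ‖d‖ ^ 2 := by fun_prop
    simpa using (this.tendsto 0).mono_left nhdsWithin_le_nhds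
  linarith [le_of_tendsto_of_tendsto (hf.hasLineDerivAt d).tendsto_slope_zero_right hlim hslope]

lemma Convex.le_segment_of_add_mul_norm_sq_le_sub {s : Set E} (hs : Convex ℝ s)
    {f' : E → E →ₗ[ℝ] ℝ} (h : ∀ x ∈ s, ∀ y ∈ s, f' x (y - x) + μ * ‖y - x‖ ^ 2 ≤ f y - f x)
    {x y : E} (hx : x ∈ s) (hy : y ∈ s) {t : ℝ} (ht : t ∈ Icc (0 : ℝ) 1) :
    f (x + t • (y - x)) ≤ (1 - t) * f x + t * f y - μ * (t * (1 - t)) * ‖y - x‖ ^ 2 := by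
  obtain ⟨ht0, ht1⟩ := ht
  set d := y - x
  set z := x + t • d
  have hz : z ∈ s := by
    convert hs hx hy (sub_nonneg.mpr ht1) ht0 (sub_add_cancel 1 t) using 1
    simp only [z, d]
    module
  have hzx : x - z = (-t) • d := by simp only [z]; module
  have hzy : y - z = (1 - t) • d := by simp only [z, d]; module
  have hx' := h z hz x hx
  have hy' := h z hz y hy
  rw [hzx, map_smul, smul_eq_mul, norm_smul, Real.norm_eq_abs, mul_pow, sq_abs] at hx'
  rw [hzy, map_smul, smul_eq_mul, norm_smul, Real.norm_eq_abs, mul_pow, sq_abs] at hy'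
  nlinarith [mul_le_mul_of_nonneg_left hx' (sub_nonneg.mpr ht1), mul_le_mul_of_nonneg_left hy' ht0]

end StrongConvexity

theorem stmt_16_general {H : Type*} [NormedAddCommGroup H] [InnerProductSpace ℝ H] [CompleteSpace H]
    (K : Set H) (hKconv : Convex ℝ K)
    (g : H → H) (hg : ∀ x ∈ K, ∃ w : H, g w = x)
    (μ : ℝ)
    (F : H → ℝ) (F' : H → H) (hF : ∀ x : H, HasGradientAt F (F' x) x) :
    (∀ u v : H, g u ∈ K → g v ∈ K → ∀ t ∈ Set.Icc (0 : ℝ) 1,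
        Real.exp (F (g u + t • (g v - g u))) ≤
          (1 - t) * Real.exp (F (g u)) + t * Real.exp (F (g v))
            - μ * (t * (1 - t)) * ‖g v - g u‖ ^ 2) ↔
      ∀ u v : H, g u ∈ K → g v ∈ K →
        ⟪Real.exp (F (g u)) • F' (g u), g v - g u⟫ + μ * ‖g v - g u‖ ^ 2 ≤
          Real.exp (F (g v)) - Real.exp (F (g u)) := by
  have hexpF : ∀ x, HasFDerivAt (fun x => Real.exp (F x))
      (InnerProductSpace.toDual ℝ H (Real.exp (F x) • F' x)) x := fun x => by
    simpa using (hF x).hasFDerivAt.exp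
  constructor
  · intro h u v hu hv
    simpa [real_inner_smul_left] using (hexpF (g u)).add_mul_norm_sq_le_sub_of_segment_le
      fun t ht => h u v hu hv t (Ioc_subset_Icc_self ht)
  · intro h u v hu hv t ht
    refine hKconv.le_segment_of_add_mul_norm_sq_le_sub
      (f := fun x => Real.exp (F x)) (f' := fun x => innerₗ H (Real.exp (F x) • F' x)) ?_ hu hv ht
    intro x hx y hy
    obtain ⟨u, rfl⟩ := hg x hx
    obtain ⟨v, rfl⟩ := hg y hy
    simpa [real_inner_smul_left] using h u v hx hy

theorem stmt_16 {H : Type*} [NormedAddCommGroup H] [InnerProductSpace ℝ H] [CompleteSpace H]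
    (K : Set H) (hK : K.Nonempty) (hKconv : Convex ℝ K)
    (g : H → H) (hg : ∀ x ∈ K, ∃ w : H, g w = x)
    (μ : ℝ) (hμ : 0 < μ)
    (F : H → ℝ) (F' : H → H) (hF : ∀ x : H, HasGradientAt F (F' x) x) :
    (∀ u v : H, g u ∈ K → g v ∈ K → ∀ t ∈ Set.Icc (0 : ℝ) 1,
        Real.exp (F (g u + t • (g v - g u))) ≤
          (1 - t) * Real.exp (F (g u)) + t * Real.exp (F (g v))
            - μ * (t * (1 - t)) * ‖g v - g u‖ ^ 2) ↔
      ∀ u v : H, g u ∈ K → g v ∈ K →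
        ⟪Real.exp (F (g u)) • F' (g u), g v - g u⟫ + μ * ‖g v - g u‖ ^ 2 ≤
          Real.exp (F (g v)) - Real.exp (F (g u)) :=
  stmt_16_general K hKconv g hg μ F F' hF
end

section
/- Let H be a real Hilbert space, K a nonempty convex subset of H, g : H → H a map, μ > 0, and F : H → ℝ Fréchet differentiable and strongly exponentially general convex with respect to g, i.e. exp(F(g u + t·(g v − g u))) ≤ (1−t)·exp(F(g u)) + t·exp(F(g v)) − μ·t·(1−t)·‖g v − g u‖² for all u, v with g u, g v ∈ K and all t ∈ [0,1]. Then ⟨exp(F(g u))·∇F(g u) − exp(F(g v))·∇F(g v), g u − g v⟩ ≥ 2μ·‖g v − g u‖² for all u, v ∈ H with g u, g v ∈ K. -/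
/-!
Differentiating the strong convexity inequality of `G = exp ∘ F` along the segment at `t = 0`
gives `⟪∇G x, y - x⟫ ≤ G y - G x - μ‖y - x‖²`; adding this to the same inequality with `x` and
`y` exchanged cancels the values of `G` and leaves `2μ‖y - x‖²`.
-/

open scoped RealInnerProductSpace Topology
open Filter Set

theorem HasDerivAt.le_of_eventually_le_nhdsGT {f g : ℝ → ℝ} {f' g' x : ℝ}
    (hf : HasDerivAt f f' x) (hg : HasDerivAt g g' x) (hx : f x = g x)
    (hle : ∀ᶠ t in 𝓝[>] x, f t ≤ g t) : f' ≤ g' := by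
  have hslope : Tendsto (slope (g - f) x) (𝓝[>] x) (𝓝 (g' - f')) :=
    (hasDerivAt_iff_tendsto_slope.mp (hg.sub hf)).mono_left (nhdsGT_le_nhdsNE x)
  refine sub_nonneg.mp (ge_of_tendsto hslope ?_)
  filter_upwards [hle, self_mem_nhdsWithin] with t ht (hxt : x < t)
  rw [slope_def_field, Pi.sub_apply, Pi.sub_apply, hx, sub_self, sub_zero]
  exact div_nonneg (sub_nonneg.mpr ht) (sub_nonneg.mpr hxt.le)

section Gradient

variable {H : Type*} [NormedAddCommGroup H] [InnerProductSpace ℝ H] [CompleteSpace H]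

theorem HasGradientAt.exp {F : H → ℝ} {F' x : H} (hF : HasGradientAt F F' x) :
    HasGradientAt (fun y ↦ Real.exp (F y)) (Real.exp (F x) • F') x := by
  rw [hasGradientAt_iff_hasFDerivAt, map_smul]
  exact hF.hasFDerivAt.exp

theorem HasGradientAt.hasDerivAt_add_smul_s17 {G : H → ℝ} {G' x : H} (hG : HasGradientAt G G' x)
    (d : H) : HasDerivAt (fun t : ℝ ↦ G (x + t • d)) ⟪G', d⟫ 0 := by
  have hline : HasDerivAt (fun t : ℝ ↦ x + t • d) d 0 := by
    simpa using ((hasDerivAt_id (0 : ℝ)).smul_const d).const_add x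
  have hG₀ : HasFDerivAt G (InnerProductSpace.toDual ℝ H G') (x + (0 : ℝ) • d) := by
    simpa using hG.hasFDerivAt
  simpa [Function.comp_def] using hG₀.comp_hasDerivAt 0 hline

/-- In the convention of `StrongConvexOn` this is modulus `2 * μ`. -/
def StrongConvexOnSegment (μ : ℝ) (G : H → ℝ) (x y : H) : Prop :=
  ∀ t ∈ Icc (0 : ℝ) 1,
    G (x + t • (y - x)) ≤ (1 - t) * G x + t * G y - μ * (t * (1 - t)) * ‖y - x‖ ^ 2

theorem StrongConvexOnSegment.inner_gradient_le {μ : ℝ} {G : H → ℝ} {G' x y : H}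
    (hconv : StrongConvexOnSegment μ G x y) (hG : HasGradientAt G G' x) :
    ⟪G', y - x⟫ ≤ G y - G x - μ * ‖y - x‖ ^ 2 := by
  set d := y - x
  have hchord : HasDerivAt (fun t : ℝ ↦ G x + t * (G y - G x) - μ * (t * (1 - t)) * ‖d‖ ^ 2)
      (G y - G x - μ * ‖d‖ ^ 2) 0 := by
    simpa using (((hasDerivAt_id' (0 : ℝ)).mul_const (G y - G x)).const_add (G x)).fun_sub
      ((((hasDerivAt_id' (0 : ℝ)).fun_mul ((hasDerivAt_id' 0).const_sub 1)).const_mul μ).mul_const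
        (‖d‖ ^ 2))
  refine (hG.hasDerivAt_add_smul_s17 d).le_of_eventually_le_nhdsGT hchord (by simp) ?_
  filter_upwards [Ioo_mem_nhdsGT (zero_lt_one' ℝ)] with t ht
  linarith [hconv t (Ioo_subset_Icc_self ht)]

theorem StrongConvexOnSegment.two_mul_le_inner_gradient_sub {μ : ℝ} {G : H → ℝ} {G' : H → H}
    {x y : H} (hxy : StrongConvexOnSegment μ G x y) (hyx : StrongConvexOnSegment μ G y x)
    (hx : HasGradientAt G (G' x) x) (hy : HasGradientAt G (G' y) y) :
    2 * μ * ‖y - x‖ ^ 2 ≤ ⟪G' x - G' y, x - y⟫ := by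
  have h₁ := hxy.inner_gradient_le hx
  have h₂ := hyx.inner_gradient_le hy
  rw [norm_sub_rev] at h₂
  simp only [inner_sub_left, inner_sub_right] at h₁ h₂ ⊢
  linarith

end Gradient

theorem stmt_17_general {H : Type*} [NormedAddCommGroup H] [InnerProductSpace ℝ H] [CompleteSpace H]
    (K : Set H)
    (g : H → H) (μ : ℝ)
    (F : H → ℝ) (F' : H → H) (hF : ∀ x : H, HasGradientAt F (F' x) x)
    (hconv : ∀ u v : H, g u ∈ K → g v ∈ K → ∀ t ∈ Set.Icc (0 : ℝ) 1,
      Real.exp (F (g u + t • (g v - g u))) ≤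
        (1 - t) * Real.exp (F (g u)) + t * Real.exp (F (g v))
          - μ * (t * (1 - t)) * ‖g v - g u‖ ^ 2) :
    ∀ u v : H, g u ∈ K → g v ∈ K →
      2 * μ * ‖g v - g u‖ ^ 2 ≤
        ⟪Real.exp (F (g u)) • F' (g u) - Real.exp (F (g v)) • F' (g v), g u - g v⟫ := by
  intro u v hu hv
  exact StrongConvexOnSegment.two_mul_le_inner_gradient_sub (G := fun x ↦ Real.exp (F x))
    (G' := fun x ↦ Real.exp (F x) • F' x) (hconv u v hu hv) (hconv v u hv hu)
    (hF (g u)).exp (hF (g v)).exp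

theorem stmt_17 {H : Type*} [NormedAddCommGroup H] [InnerProductSpace ℝ H] [CompleteSpace H]
    (K : Set H) (hK : K.Nonempty) (hKconv : Convex ℝ K)
    (g : H → H) (μ : ℝ) (hμ : 0 < μ)
    (F : H → ℝ) (F' : H → H) (hF : ∀ x : H, HasGradientAt F (F' x) x)
    (hconv : ∀ u v : H, g u ∈ K → g v ∈ K → ∀ t ∈ Set.Icc (0 : ℝ) 1,
      Real.exp (F (g u + t • (g v - g u))) ≤
        (1 - t) * Real.exp (F (g u)) + t * Real.exp (F (g v))
          - μ * (t * (1 - t)) * ‖g v - g u‖ ^ 2) :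
    ∀ u v : H, g u ∈ K → g v ∈ K →
      2 * μ * ‖g v - g u‖ ^ 2 ≤
        ⟪Real.exp (F (g u)) • F' (g u) - Real.exp (F (g v)) • F' (g v), g u - g v⟫ :=
  stmt_17_general K g μ F F' hF hconv
end

section
/- Let H be a real Hilbert space, K a nonempty convex subset of H, and g : H → H a map whose range contains K (for every x ∈ K there exists w ∈ H with g w = x). Let F : H → ℝ be strictly exponentially general convex: exp(F((1−t)·g u + t·g v)) < (1−t)·exp(F(g u)) + t·exp(F(g v)) for all u, v ∈ H with g u, g v ∈ K, g u ≠ g v, and all t ∈ (0,1). If u ∈ H with g u ∈ K is a local minimum of F on K, i.e. there exists δ > 0 such that F(g u) ≤ F(x) for all x ∈ K with ‖x − g u‖ < δ, then F(g u) ≤ F(x) for all x ∈ K. -/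
open scoped RealInnerProductSpace

theorem stmt_19 {H : Type*} [NormedAddCommGroup H] [InnerProductSpace ℝ H] [CompleteSpace H]
    (K : Set H) (hK : K.Nonempty) (hKconv : Convex ℝ K)
    (g : H → H) (hg : ∀ x ∈ K, ∃ w : H, g w = x)
    (F : H → ℝ)
    (hstrict : ∀ u v : H, g u ∈ K → g v ∈ K → g u ≠ g v → ∀ t ∈ Set.Ioo (0 : ℝ) 1,
      Real.exp (F ((1 - t) • g u + t • g v)) <
        (1 - t) * Real.exp (F (g u)) + t * Real.exp (F (g v)))
    (u : H) (hu : g u ∈ K)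
    (δ : ℝ) (hδ : 0 < δ)
    (hloc : ∀ x ∈ K, ‖x - g u‖ < δ → F (g u) ≤ F x) :
    ∀ x ∈ K, F (g u) ≤ F x := by
  intro x hx
  by_cases hne : g u = x
  · rw [← hne]
  obtain ⟨w, hw⟩ := hg x hx
  have hwK : g w ∈ K := hw ▸ hx
  have hnorm : 0 < ‖g w - g u‖ := by
    rw [norm_pos_iff, sub_ne_zero, hw]
    exact fun h => hne h.symm
  set t : ℝ := min (δ / (2 * ‖g w - g u‖)) (1 / 2) with ht
  have ht0 : 0 < t := lt_min (by positivity) (by norm_num)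
  have ht1 : t < 1 := lt_of_le_of_lt (min_le_right _ _) (by norm_num)
  have hmem : t ∈ Set.Ioo (0 : ℝ) 1 := ⟨ht0, ht1⟩
  set z := (1 - t) • g u + t • g w with hz
  have hzK : z ∈ K := hKconv hu hwK (by linarith) ht0.le (by ring)
  have hzclose : ‖z - g u‖ < δ := by
    have : z - g u = t • (g w - g u) := by
      rw [hz]; module
    rw [this, norm_smul, Real.norm_eq_abs, abs_of_pos ht0]
    calc t * ‖g w - g u‖ ≤ (δ / (2 * ‖g w - g u‖)) * ‖g w - g u‖ := by
          apply mul_le_mul_of_nonneg_right (min_le_left _ _) (norm_nonneg _)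
      _ = δ / 2 := by field_simp
      _ < δ := by linarith
  have hFz : F (g u) ≤ F z := hloc z hzK hzclose
  have hkey := hstrict u w hu hwK (by rw [hw]; exact hne) t hmem
  have hexp : Real.exp (F (g u)) ≤ Real.exp (F z) := Real.exp_le_exp.mpr hFz
  have : Real.exp (F (g u)) < Real.exp (F (g w)) := by nlinarith [hexp, hkey]
  rw [← hw]
  exact (Real.exp_lt_exp.mp this).le
end
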